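/- Let P and Q be distributions on (X, Y) with P(X|Y)=Q(X|Y) on the support of P and P(Y) absolutely continuous w.r.t. Q(Y). If Y ⊥ X_j | X_{-j} under Q, then P(X_j | Y, X_{-j}) = P(X_j | X_{-j}), i.e., the conditional distribution of X_j given (Y, X_{-j}) under P does not depend on Y. -/

import Mathlib

open Finset Function

variable {p : ℕ} {A B : Type*}

/-- `P(X = x)`: the marginal distribution of the covariate vector. -/
def pX [Fintype B] (P : (Fin p → A) × B → ℝ) (x : Fin p → A) : ℝ := ∑ y, P (x, y)

/-- `P(Y = y)`: the marginal distribution of the response. -/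
def pY [Fintype A] (P : (Fin p → A) × B → ℝ) (y : B) : ℝ := ∑ x, P (x, y)

/-- `P(X₋ⱼ = x₋ⱼ)`: probability that all coordinates except `j` agree with `x`. -/
def pXmj [Fintype A] [Fintype B] (P : (Fin p → A) × B → ℝ) (j : Fin p) (x : Fin p → A) : ℝ :=
  ∑ a, pX P (Function.update x j a)

/-- `P(Y = y, X₋ⱼ = x₋ⱼ)`. -/
def pYXmj [Fintype A] (P : (Fin p → A) × B → ℝ) (j : Fin p) (x : Fin p → A) (y : B) : ℝ :=
  ∑ a, P (Function.update x j a, y)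

/-- `P` is a probability distribution on the discrete space `(Fin p → A) × B`. -/
def IsDist [Fintype A] [Fintype B] (P : (Fin p → A) × B → ℝ) : Prop :=
  (∀ z, 0 ≤ P z) ∧ ∑ z, P z = 1

/-- `Y ⊥ Xⱼ | X₋ⱼ` under `P`, stated in cross-multiplied (division-free) form:
wherever the conditioning event `X₋ⱼ = x₋ⱼ` has positive probability,
`P(Y = y, Xⱼ = a | X₋ⱼ) = P(Y = y | X₋ⱼ) · P(Xⱼ = a | X₋ⱼ)`. -/
def CondIndep [Fintype A] [Fintype B] (P : (Fin p → A) × B → ℝ) (j : Fin p) : Prop :=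
  ∀ (x : Fin p → A) (y : B) (a : A), 0 < pXmj P j x →
    P (Function.update x j a, y) * pXmj P j x =
      pYXmj P j x y * pX P (Function.update x j a)

/-! On the support of `Q(Y)` the hypotheses make `P(x, y) = r(y) · Q(x, y)` with
`r(y) = P(Y = y) / Q(Y = y)`, and off it both sides vanish. A factor depending on `y` alone
cancels from `P(Xⱼ = a | Y = y, X₋ⱼ)`, so this conditional is the same under `P` and `Q`; under
`Q` it does not depend on `y` by the conditional independence, and summing over `y` identifies it
with `P(Xⱼ = a | X₋ⱼ)`. -/

/-- `P(Xⱼ = a | Y = y, X₋ⱼ = x₋ⱼ)` does not depend on `y`, in cross-multiplied form. -/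
def CondIndepCross [Fintype A] (P : (Fin p → A) × B → ℝ) (j : Fin p) : Prop :=
  ∀ (x : Fin p → A) (a : A) (y y' : B),
    P (update x j a, y) * pYXmj P j x y' = P (update x j a, y') * pYXmj P j x y

section

variable [Fintype A] {P : (Fin p → A) × B → ℝ}

lemma apply_eq_zero_of_pY_eq_zero (hP : ∀ z, 0 ≤ P z) {y : B} (h : pY P y = 0) (x : Fin p → A) :
    P (x, y) = 0 :=
  (sum_eq_zero_iff_of_nonneg fun x _ => hP (x, y)).mp h x (mem_univ x)

lemma exists_eq_mul_of_cond_eq {Q : (Fin p → A) × B → ℝ} (hP : ∀ z, 0 ≤ P z)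
    (hcond : ∀ x y, 0 < pY P y → P (x, y) * pY Q y = Q (x, y) * pY P y)
    (hac : ∀ y, pY Q y = 0 → pY P y = 0) :
    ∃ r : B → ℝ, ∀ x y, P (x, y) = r y * Q (x, y) := by
  refine ⟨fun y => pY P y / pY Q y, fun x y => ?_⟩
  by_cases hQy : pY Q y = 0
  · simp [apply_eq_zero_of_pY_eq_zero hP (hac y hQy), hQy]
  have hcross : P (x, y) * pY Q y = Q (x, y) * pY P y := by
    rcases (show 0 ≤ pY P y from sum_nonneg fun x _ => hP (x, y)).lt_or_eq with hPy | hPy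
    · exact hcond x y hPy
    · rw [apply_eq_zero_of_pY_eq_zero hP hPy.symm, ← hPy]
      ring
  field_simp
  linarith

lemma CondIndepCross.of_eq_mul {Q : (Fin p → A) × B → ℝ} {j : Fin p} (hQ : CondIndepCross Q j)
    {r : B → ℝ} (hPQ : ∀ x y, P (x, y) = r y * Q (x, y)) : CondIndepCross P j := by
  have hsum : ∀ x y, pYXmj P j x y = r y * pYXmj Q j x y := fun x y => by
    simp only [pYXmj, hPQ, mul_sum]
  intro x a y y'
  rw [hPQ, hPQ, hsum, hsum]
  linear_combination r y * r y' * hQ x a y y'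

variable [Fintype B]

lemma apply_update_eq_zero_of_pXmj_eq_zero (hP : ∀ z, 0 ≤ P z) {j : Fin p} {x : Fin p → A}
    (h : pXmj P j x = 0) (a : A) (y : B) : P (update x j a, y) = 0 := by
  have hpX : pX P (update x j a) = 0 :=
    (sum_eq_zero_iff_of_nonneg fun _ _ => sum_nonneg fun _ _ => hP _).mp h a (mem_univ a)
  exact (sum_eq_zero_iff_of_nonneg fun _ _ => hP _).mp hpX y (mem_univ y)

lemma pXmj_eq_sum_pYXmj (P : (Fin p → A) × B → ℝ) (j : Fin p) (x : Fin p → A) :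
    pXmj P j x = ∑ y, pYXmj P j x y :=
  sum_comm

lemma CondIndep.condIndepCross (hP : ∀ z, 0 ≤ P z) {j : Fin p} (h : CondIndep P j) :
    CondIndepCross P j := by
  intro x a y y'
  rcases (show 0 ≤ pXmj P j x from sum_nonneg fun _ _ => sum_nonneg fun _ _ => hP _).lt_or_eq
    with hx | hx
  · refine mul_right_cancel₀ hx.ne' ?_
    linear_combination pYXmj P j x y' * h x y a hx - pYXmj P j x y * h x y' a hx
  · simp only [pYXmj, apply_update_eq_zero_of_pXmj_eq_zero hP hx.symm, zero_mul, sum_const_zero]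

lemma CondIndepCross.mul_pXmj {j : Fin p} (h : CondIndepCross P j) (x : Fin p → A) (y : B)
    (a : A) : P (update x j a, y) * pXmj P j x = pX P (update x j a) * pYXmj P j x y := by
  rw [pXmj_eq_sum_pYXmj, pX, mul_sum, sum_mul]
  exact sum_congr rfl fun y' _ => h x a y y'

end

/-- If `P(X|Y) = Q(X|Y)` on the support of `P`, `P(Y) ≪ Q(Y)`, and
`Y ⊥ Xⱼ | X₋ⱼ` under `Q`, then `P(Xⱼ | Y, X₋ⱼ) = P(Xⱼ | X₋ⱼ)` at all points where the
conditioning event `(Y = y, X₋ⱼ = x₋ⱼ)` has positive probability under `P`. -/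
theorem conditional_does_not_depend_on_Y
    [Fintype A] [Fintype B] (P Q : (Fin p → A) × B → ℝ) (j : Fin p)
    (hP : IsDist P) (hQ : IsDist Q)
    (hcond : ∀ (x : Fin p → A) (y : B), 0 < pY P y → P (x, y) * pY Q y = Q (x, y) * pY P y)
    (hac : ∀ y : B, pY Q y = 0 → pY P y = 0)
    (hQind : CondIndep Q j) :
    ∀ (x : Fin p → A) (y : B) (a : A), 0 < pYXmj P j x y →
      P (Function.update x j a, y) * pXmj P j x =
        pX P (Function.update x j a) * pYXmj P j x y := by
  obtain ⟨r, hPQ⟩ := exists_eq_mul_of_cond_eq hP.1 hcond hac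
  have hPind : CondIndepCross P j := (hQind.condIndepCross hQ.1).of_eq_mul hPQ
  exact fun x y a _ => hPind.mul_pXmj x y a
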